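/- arXiv:1202.6665 — 2 statements merged into one kernel-verified Lean document; each statement's English description precedes it below -/
import Mathlib

section
/- An exterior space X is Č₀-complete if and only if the canonical map e₀ : L(X) → Ě(X) is bijective and for every x ∈ L(X) and every open U containing x, there exist E ∈ ε(X) and a q₀-saturated open subset W of E with x ∈ W ⊂ U. -/
open Set Topology Filter

universe u v

/-- An externology on a topological space: a nonempty family of open subsets closed under
finite intersections and under open supersets. -/
structure Externology (X : Type u) [TopologicalSpace X] where
  sets : Set (Set X)
  nonempty' : sets.Nonempty
  isOpen' : ∀ E ∈ sets, IsOpen E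
  inter' : ∀ E ∈ sets, ∀ F ∈ sets, E ∩ F ∈ sets
  superset' : ∀ E ∈ sets, ∀ U : Set X, IsOpen U → E ⊆ U → U ∈ sets

variable {X : Type u} {Y : Type v} [TopologicalSpace X] [TopologicalSpace Y]

/-- The limit space `L(X)` of an exterior space: the intersection of all exterior open sets. -/
def Elimit (ε : Externology X) : Set X := ⋂₀ ε.sets

/-- `V` is a `q₀`-saturated open subset of `E`: an open subset of `E` which is a union of
path-components of `E`. -/
def IsQSatOpen (E V : Set X) : Prop :=
  V ⊆ E ∧ IsOpen V ∧ ∀ x ∈ V, pathComponentIn E x ⊆ V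

/-- An end point of an exterior space: a compatible choice of a path-component of each
exterior open subset. -/
structure EndPt (ε : Externology X) where
  comp : Set X → Set X
  isComp' : ∀ E ∈ ε.sets, ∃ x ∈ E, comp E = pathComponentIn E x
  mono' : ∀ E ∈ ε.sets, ∀ F ∈ ε.sets, E ⊆ F → comp E ⊆ comp F

/-- The inverse limit topology on the end space. -/
instance EndPt.instTopologicalSpace (ε : Externology X) : TopologicalSpace (EndPt ε) :=
  .generateFrom {S | ∃ E ∈ ε.sets, ∃ V : Set X, IsQSatOpen E V ∧
    S = {a : EndPt ε | a.comp E ⊆ V}}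

/-- The canonical map `e₀ : L(X) → Ě(X)` sending a point of the limit space to the family
of its path-components. -/
def endOf (ε : Externology X) (x : Elimit ε) : EndPt ε where
  comp E := pathComponentIn E (x : X)
  isComp' E hE := ⟨(x : X), x.2 E hE, rfl⟩
  mono' _E _hE _F _hF h := pathComponentIn_mono h

/-- The gluing relation of the push-out `X ∪_{L(X)} Ě(X)`. -/
inductive CompletionRel (ε : Externology X) : X ⊕ EndPt ε → X ⊕ EndPt ε → Prop
  | glue (x : Elimit ε) : CompletionRel ε (Sum.inl (x : X)) (Sum.inr (endOf ε x))

/-- The underlying set of the completion: the push-out `X ∪_{L(X)} Ě(X)`. -/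
def CompletionPts (ε : Externology X) : Type u := Quot (CompletionRel ε)

/-- The canonical map `p₀ : X → X ∪_{L(X)} Ě(X)`. -/
def p0 (ε : Externology X) : X → CompletionPts ε := fun x => Quot.mk _ (Sum.inl x)

/-- The canonical map `incl₀ : Ě(X) → X ∪_{L(X)} Ě(X)`. -/
def incl0 (ε : Externology X) : EndPt ε → CompletionPts ε := fun a => Quot.mk _ (Sum.inr a)

/-- The family `𝒢₀` of subsets of the push-out `X ∪_{L(X)} Ě(X)`: `W ∈ 𝒢₀` iff `p₀⁻¹ W` is
open in `X`, `incl₀⁻¹ W` is open in `Ě(X)`, and each end `a ∈ incl₀⁻¹ W` admits `E ∈ ε(X)`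
and an open `G ⊆ π₀(E)` (encoded by the saturated open set `V = q₀⁻¹ G ⊆ E`) with
`a ∈ η₀⁻¹ G ⊆ incl₀⁻¹ W` and `q₀⁻¹ G ⊆ p₀⁻¹ W`. -/
def G0 (ε : Externology X) : Set (Set (CompletionPts ε)) :=
  {W | IsOpen (p0 ε ⁻¹' W) ∧ IsOpen {a : EndPt ε | incl0 ε a ∈ W} ∧
    ∀ a : EndPt ε, incl0 ε a ∈ W →
      ∃ E ∈ ε.sets, ∃ V : Set X, IsQSatOpen E V ∧ a.comp E ⊆ V ∧
        (∀ b : EndPt ε, b.comp E ⊆ V → incl0 ε b ∈ W) ∧ ∀ x ∈ V, p0 ε x ∈ W}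

/-- The topology `𝒢₀` on the completion. -/
instance CompletionPts.instTopologicalSpace (ε : Externology X) :
    TopologicalSpace (CompletionPts ε) := .generateFrom (G0 ε)

/-- The basic exterior subset `W₀(E) = p₀(E) ∪ incl₀(Ě(X))` of the completion. -/
def W0 (ε : Externology X) (E : Set X) : Set (CompletionPts ε) :=
  p0 ε '' E ∪ Set.range (incl0 ε)

lemma W0_mono (ε : Externology X) {E F : Set X} (h : E ⊆ F) : W0 ε E ⊆ W0 ε F :=
  union_subset_union_left _ (image_mono h)

/-- The externology of the completion `Č₀(X)`, with base `{W₀(E) | E ∈ ε(X)}`. -/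
def completionExternology (ε : Externology X) : Externology (CompletionPts ε) where
  sets := {U | IsOpen U ∧ ∃ E ∈ ε.sets, W0 ε E ⊆ U}
  nonempty' := by
    obtain ⟨E, hE⟩ := ε.nonempty'
    exact ⟨univ, isOpen_univ, E, hE, subset_univ _⟩
  isOpen' := fun U hU => hU.1
  inter' := by
    rintro U ⟨hUo, E, hE, hEU⟩ V ⟨hVo, F, hF, hFV⟩
    refine ⟨hUo.inter hVo, E ∩ F, ε.inter' E hE F hF, ?_⟩
    exact subset_inter ((W0_mono ε inter_subset_left).trans hEU)
      ((W0_mono ε inter_subset_right).trans hFV)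
  superset' := by
    rintro U ⟨hUo, E, hE, hEU⟩ V hVo hUV
    exact ⟨hVo, E, hE, hEU.trans hUV⟩

/-- An exterior map between exterior spaces. -/
def IsExteriorMap (εX : Externology X) (εY : Externology Y) (f : X → Y) : Prop :=
  Continuous f ∧ ∀ E ∈ εY.sets, f ⁻¹' E ∈ εX.sets

/-- An isomorphism of exterior spaces. -/
def IsExteriorIso (εX : Externology X) (εY : Externology Y) (f : X → Y) : Prop :=
  IsExteriorMap εX εY f ∧ ∃ g : Y → X, IsExteriorMap εY εX g ∧ g ∘ f = id ∧ f ∘ g = id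

/-- An exterior space is `Č₀`-complete if the canonical map `p₀ : X → Č₀(X)` is an
isomorphism of exterior spaces. -/
def C0Complete (ε : Externology X) : Prop :=
  IsExteriorIso ε (completionExternology ε) (p0 ε)

/-- A `π₀`-`ε(X)`-net: a net eventually contained in a single path-component of every
exterior open set. -/
def IsPi0Net {D : Type*} [Preorder D] (ε : Externology X) (u : D → X) : Prop :=
  ∀ E ∈ ε.sets, ∃ C : Set X, (∃ y ∈ E, C = pathComponentIn E y) ∧ ∀ᶠ δ in atTop, u δ ∈ C

/-- The `r`-exterior externology of a flow: open sets absorbing every positive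
semi-trajectory. -/
def rExt (φ : Flow ℝ X) : Externology X where
  sets := {N | IsOpen N ∧ ∀ x : X, ∃ r₀ : ℝ, ∀ t : ℝ, r₀ < t → φ t x ∈ N}
  nonempty' := ⟨univ, isOpen_univ, fun _ => ⟨0, fun _ _ => mem_univ _⟩⟩
  isOpen' := fun _ hN => hN.1
  inter' := by
    rintro N ⟨hNo, hN⟩ M ⟨hMo, hM⟩
    refine ⟨hNo.inter hMo, fun x => ?_⟩
    obtain ⟨r, hr⟩ := hN x
    obtain ⟨s, hs⟩ := hM x
    exact ⟨max r s, fun t ht =>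
      ⟨hr t ((le_max_left r s).trans_lt ht), hs t ((le_max_right r s).trans_lt ht)⟩⟩
  superset' := by
    rintro N ⟨_, hN⟩ U hUo hNU
    exact ⟨hUo, fun x => (hN x).imp fun r h t ht => hNU (h t ht)⟩

/-- The `ω^r`-limit set of a point for a flow. -/
def omegaR (φ : Flow ℝ X) (x : X) : Set X :=
  ⋂ t : ℝ, closure ((fun s : ℝ => φ s x) '' Ici t)

/-- The set of critical (rest) points of a flow. -/
def criticalSet (φ : Flow ℝ X) : Set X := {x | ∀ r : ℝ, φ r x = x}

/-- The set of periodic points of a flow. -/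
def periodicSet (φ : Flow ℝ X) : Set X := {x | ∃ r : ℝ, r ≠ 0 ∧ φ r x = x}

/-- The global `Ω^r`-limit of a flow. -/
def OmegaRSet (φ : Flow ℝ X) : Set X := ⋃ x : X, omegaR φ x

/-- The compatibility conditions making an exterior space with a flow an `r`-exterior flow:
`φ : ℝ^r ×̄ M_d → M` is exterior and each `F_t : M ×̄ I → M`, `F_t(x,s) = φ(ts, x)`,
is exterior. -/
structure IsRExteriorFlow (ε : Externology X) (φ : Flow ℝ X) : Prop where
  absorb : ∀ E ∈ ε.sets, ∀ x : X, ∃ r₀ : ℝ, ∀ t : ℝ, r₀ < t → φ t x ∈ E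
  homotopyExt : ∀ t : ℝ, ∀ E ∈ ε.sets, ∃ G ∈ ε.sets, ∀ x ∈ G, ∀ s ∈ Icc (0:ℝ) 1,
    φ (t * s) x ∈ E


/-!
An open set of `Č₀(X)` around an end contains the image under `p₀` of a saturated open subset
of some exterior set covering that end: this holds for the generating family `𝒢₀` by
definition and survives finite intersections and unions. Hence if `p₀` has a continuous
inverse, the inverse image of an open `U ∋ x` is such a neighbourhood of the end of `x`.
Conversely, if `e₀` is bijective, `p₀` is inverted by sending each end to the limit point
representing it, and the neighbourhood condition is exactly what makes the inverse image of
an open set a member of `𝒢₀`.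
-/

section CompletionC0

variable {ε : Externology X}

lemma EndPt.comp_subset (a : EndPt ε) {E : Set X} (hE : E ∈ ε.sets) : a.comp E ⊆ E := by
  obtain ⟨y, -, hc⟩ := a.isComp' E hE
  exact hc ▸ pathComponentIn_subset

lemma isQSatOpen_self {E : Set X} (hE : IsOpen E) : IsQSatOpen E E :=
  ⟨subset_rfl, hE, fun _ _ => pathComponentIn_subset⟩

lemma IsQSatOpen.inter {E F V W : Set X} (hV : IsQSatOpen E V) (hW : IsQSatOpen F W) :
    IsQSatOpen (E ∩ F) (V ∩ W) :=
  ⟨inter_subset_inter hV.1 hW.1, hV.2.1.inter hW.2.1, fun x hx =>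
    subset_inter ((pathComponentIn_mono inter_subset_left).trans (hV.2.2 x hx.1))
      ((pathComponentIn_mono inter_subset_right).trans (hW.2.2 x hx.2))⟩

lemma p0_eq_incl0_endOf (x : Elimit ε) : p0 ε (x : X) = incl0 ε (endOf ε x) :=
  Quot.sound (CompletionRel.glue x)

lemma exists_endOf_eq_of_p0_eq_incl0 {x : X} {a : EndPt ε} (h : p0 ε x = incl0 ε a) :
    ∃ hx : x ∈ Elimit ε, endOf ε ⟨x, hx⟩ = a := by
  let IsLimitPointOf : CompletionPts ε → Prop :=
    Quot.lift (Sum.elim (fun y => ∃ hy : y ∈ Elimit ε, endOf ε ⟨y, hy⟩ = a) (· = a)) (by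
      rintro _ _ ⟨y⟩
      exact propext ⟨fun ⟨_, hy⟩ => hy, fun hy => ⟨y.2, hy⟩⟩)
  have ha : IsLimitPointOf (incl0 ε a) := rfl
  rwa [← h] at ha

lemma endOf_injective_of_injective_p0 (h : Function.Injective (p0 ε)) :
    Function.Injective (endOf ε) := fun x y hxy =>
  Subtype.ext (h (by rw [p0_eq_incl0_endOf, p0_eq_incl0_endOf, hxy]))

lemma endOf_surjective_of_surjective_p0 (h : Function.Surjective (p0 ε)) :
    Function.Surjective (endOf ε) := fun a => by
  obtain ⟨x, hx⟩ := h (incl0 ε a)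
  obtain ⟨hxL, rfl⟩ := exists_endOf_eq_of_p0_eq_incl0 hx
  exact ⟨_, rfl⟩

lemma continuous_p0 : Continuous (p0 ε) :=
  continuous_generateFrom_iff.2 fun _ hW => hW.1

lemma isExteriorMap_p0 : IsExteriorMap ε (completionExternology ε) (p0 ε) := by
  refine ⟨continuous_p0, fun U ⟨hU, F, hF, hFU⟩ => ?_⟩
  exact ε.superset' F hF _ (hU.preimage continuous_p0) fun x hx => hFU (Or.inl ⟨x, hx, rfl⟩)

lemma exists_qSatOpen_of_isOpen {W : Set (CompletionPts ε)} (hW : IsOpen W) (a : EndPt ε)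
    (ha : incl0 ε a ∈ W) :
    ∃ E ∈ ε.sets, ∃ V : Set X, IsQSatOpen E V ∧ a.comp E ⊆ V ∧ V ⊆ p0 ε ⁻¹' W := by
  induction hW generalizing a with
  | basic W hW =>
    obtain ⟨E, hE, V, hV, haV, -, hVW⟩ := hW.2.2 a ha
    exact ⟨E, hE, V, hV, haV, hVW⟩
  | univ =>
    obtain ⟨E, hE⟩ := ε.nonempty'
    exact ⟨E, hE, E, isQSatOpen_self (ε.isOpen' E hE), a.comp_subset hE, fun _ _ => trivial⟩
  | inter W₁ W₂ _ _ ih₁ ih₂ =>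
    obtain ⟨E₁, hE₁, V₁, hV₁, haV₁, hVW₁⟩ := ih₁ a ha.1
    obtain ⟨E₂, hE₂, V₂, hV₂, haV₂, hVW₂⟩ := ih₂ a ha.2
    have hE := ε.inter' E₁ hE₁ E₂ hE₂
    refine ⟨E₁ ∩ E₂, hE, V₁ ∩ V₂, hV₁.inter hV₂, subset_inter ?_ ?_,
      inter_subset_inter hVW₁ hVW₂⟩
    · exact (a.mono' _ hE _ hE₁ inter_subset_left).trans haV₁
    · exact (a.mono' _ hE _ hE₂ inter_subset_right).trans haV₂
  | sUnion S _ ih =>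
    obtain ⟨W, hWS, haW⟩ := ha
    obtain ⟨E, hE, V, hV, haV, hVW⟩ := ih W hWS a haW
    exact ⟨E, hE, V, hV, haV, hVW.trans (preimage_mono (subset_sUnion_of_mem hWS))⟩

lemma exists_qSatOpen_of_isOpen_of_p0_mem {W : Set (CompletionPts ε)} (hW : IsOpen W)
    (x : Elimit ε) (hx : p0 ε x ∈ W) :
    ∃ E ∈ ε.sets, ∃ V : Set X, IsQSatOpen E V ∧ (x : X) ∈ V ∧ V ⊆ p0 ε ⁻¹' W := by
  rw [p0_eq_incl0_endOf] at hx
  obtain ⟨E, hE, V, hV, hxV, hVW⟩ := exists_qSatOpen_of_isOpen hW (endOf ε x) hx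
  exact ⟨E, hE, V, hV, hxV (mem_pathComponentIn_self (x.2 E hE)), hVW⟩

/-- The openness condition on ends in `𝒢₀` follows from the neighbourhood condition, since the
sets `{b | b.comp E ⊆ V}` are basic open in `Ě(X)`. -/
lemma mem_G0_of_forall_incl0_mem {W : Set (CompletionPts ε)} (hW : IsOpen (p0 ε ⁻¹' W))
    (hends : ∀ a : EndPt ε, incl0 ε a ∈ W →
      ∃ E ∈ ε.sets, ∃ V : Set X, IsQSatOpen E V ∧ a.comp E ⊆ V ∧
        (∀ b : EndPt ε, b.comp E ⊆ V → incl0 ε b ∈ W) ∧ ∀ x ∈ V, p0 ε x ∈ W) :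
    W ∈ G0 ε := by
  refine ⟨hW, isOpen_iff_forall_mem_open.2 fun a ha => ?_, hends⟩
  obtain ⟨E, hE, V, hV, haV, hbW, -⟩ := hends a ha
  exact ⟨{b | b.comp E ⊆ V}, hbW, .basic _ ⟨E, hE, V, hV, rfl⟩, haV⟩

noncomputable def completionRetraction (hbij : Function.Bijective (endOf ε)) :
    CompletionPts ε → X :=
  Quot.lift (Sum.elim id fun a => ((Equiv.ofBijective _ hbij).symm a : X)) (by
    rintro _ _ ⟨x⟩
    simp only [Sum.elim_inl, Sum.elim_inr, id, Equiv.ofBijective_symm_apply_apply])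

variable (hbij : Function.Bijective (endOf ε))

lemma completionRetraction_p0 (x : X) : completionRetraction hbij (p0 ε x) = x := rfl

lemma completionRetraction_incl0_mem_elimit (a : EndPt ε) :
    completionRetraction hbij (incl0 ε a) ∈ Elimit ε :=
  ((Equiv.ofBijective _ hbij).symm a).2

lemma EndPt.comp_eq_pathComponentIn_completionRetraction (a : EndPt ε) (E : Set X) :
    a.comp E = pathComponentIn E (completionRetraction hbij (incl0 ε a)) := by
  conv_lhs => rw [← Equiv.ofBijective_apply_symm_apply _ hbij a]
  rfl

lemma completionRetraction_incl0_mem_comp (a : EndPt ε) {E : Set X} (hE : E ∈ ε.sets) :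
    completionRetraction hbij (incl0 ε a) ∈ a.comp E := by
  rw [a.comp_eq_pathComponentIn_completionRetraction hbij]
  exact mem_pathComponentIn_self (completionRetraction_incl0_mem_elimit hbij a E hE)

lemma p0_completionRetraction (w : CompletionPts ε) :
    p0 ε (completionRetraction hbij w) = w := by
  induction w using Quot.ind with
  | mk w =>
    rcases w with x | a
    · rfl
    · exact (p0_eq_incl0_endOf ((Equiv.ofBijective _ hbij).symm a)).trans
        (congrArg (incl0 ε) (Equiv.ofBijective_apply_symm_apply _ hbij a))

lemma continuous_completionRetraction
    (hnbhd : ∀ x : Elimit ε, ∀ U : Set X, IsOpen U → (x : X) ∈ U →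
      ∃ E ∈ ε.sets, ∃ W : Set X, IsQSatOpen E W ∧ (x : X) ∈ W ∧ W ⊆ U) :
    Continuous (completionRetraction hbij) := by
  refine continuous_def.2 fun U hU => .basic _ (mem_G0_of_forall_incl0_mem hU fun a ha => ?_)
  obtain ⟨E, hE, V, hV, hxV, hVU⟩ :=
    hnbhd ⟨_, completionRetraction_incl0_mem_elimit hbij a⟩ U hU ha
  refine ⟨E, hE, V, hV, ?_, fun b hb => hVU (hb ?_), fun x hx => hVU hx⟩
  · rw [a.comp_eq_pathComponentIn_completionRetraction hbij]
    exact hV.2.2 _ hxV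
  · exact completionRetraction_incl0_mem_comp hbij b hE

lemma isExteriorMap_completionRetraction
    (hnbhd : ∀ x : Elimit ε, ∀ U : Set X, IsOpen U → (x : X) ∈ U →
      ∃ E ∈ ε.sets, ∃ W : Set X, IsQSatOpen E W ∧ (x : X) ∈ W ∧ W ⊆ U) :
    IsExteriorMap (completionExternology ε) ε (completionRetraction hbij) := by
  have hcont := continuous_completionRetraction hbij hnbhd
  refine ⟨hcont, fun E hE => ⟨(ε.isOpen' E hE).preimage hcont, E, hE, ?_⟩⟩
  rintro _ (⟨x, hx, rfl⟩ | ⟨a, rfl⟩)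
  · exact hx
  · exact a.comp_subset hE (completionRetraction_incl0_mem_comp hbij a hE)

end CompletionC0

/-- `X` is `Č₀`-complete iff `e₀ : L(X) → Ě(X)` is bijective and every point
of `L(X)` has arbitrarily small `q₀`-saturated open neighborhoods inside exterior sets. -/
theorem stmt_8 (ε : Externology X) :
    C0Complete ε ↔
      (Function.Bijective (endOf ε) ∧
        ∀ x : Elimit ε, ∀ U : Set X, IsOpen U → (x : X) ∈ U →
          ∃ E ∈ ε.sets, ∃ W : Set X, IsQSatOpen E W ∧ (x : X) ∈ W ∧ W ⊆ U) := by
  constructor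
  · rintro ⟨-, g, ⟨hg, -⟩, hgp, hpg⟩
    have hleft : Function.LeftInverse g (p0 ε) := Function.leftInverse_iff_comp.2 hgp
    have hright : Function.LeftInverse (p0 ε) g := Function.leftInverse_iff_comp.2 hpg
    refine ⟨⟨endOf_injective_of_injective_p0 hleft.injective,
      endOf_surjective_of_surjective_p0 hright.surjective⟩, fun x U hU hxU => ?_⟩
    obtain ⟨E, hE, V, hV, hxV, hVU⟩ :=
      exists_qSatOpen_of_isOpen_of_p0_mem (hU.preimage hg) x (by rwa [mem_preimage, hleft])
    exact ⟨E, hE, V, hV, hxV, fun y hy => hleft y ▸ hVU hy⟩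
  · rintro ⟨hbij, hnbhd⟩
    exact ⟨isExteriorMap_p0, completionRetraction hbij,
      isExteriorMap_completionRetraction hbij hnbhd,
      funext (completionRetraction_p0 hbij), funext (p0_completionRetraction hbij)⟩
end

section
/- Let X be a flow (continuous ℝ-action) and X^r the associated r-exterior flow, whose externology ε^r(X) consists of open sets N such that for every x ∈ X there is r₀ with (r₀,∞)·x ⊂ N. Then the limit space L(X^r) = ∩_{E ∈ ε^r(X)} E is an invariant subset of the flow, and the induced flow on the end space Ě(X^r) is trivial. -/
open Set Topology Filter

universe u v

variable {X : Type u} {Y : Type v} [TopologicalSpace X] [TopologicalSpace Y]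

/-! Preimages under `φ_t` of `r`-exterior sets are `r`-exterior, which makes `L(X^r)` invariant.
For `s ∈ ℝ` and `E ∈ ε^r`, the points whose orbit segment from time `0` to `s` stays in `E`
form again an `r`-exterior set `G ⊆ E ∩ φ_s⁻¹ E`. If `a` is an end and `w ∈ a(G)`, then `x ∈ a(φ_s⁻¹ E)`
is joined to `w` inside `φ_s⁻¹ E`, so `φ_s x` is joined to `φ_s w` inside `E`, and the orbit segment
joins `φ_s w` back to `w ∈ a(E)` inside `E`. Hence `φ_s x` lies in the component `a(E)`. -/

namespace EndPt

variable {ε : Externology X}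

lemma exists_mem_comp (a : EndPt ε) {E : Set X} (hE : E ∈ ε.sets) : ∃ w, w ∈ a.comp E := by
  obtain ⟨z, hz, hcomp⟩ := a.isComp' E hE
  exact ⟨z, hcomp ▸ mem_pathComponentIn_self hz⟩

lemma comp_subset_s16 (a : EndPt ε) {E : Set X} (hE : E ∈ ε.sets) : a.comp E ⊆ E := by
  obtain ⟨z, -, hcomp⟩ := a.isComp' E hE
  exact hcomp ▸ pathComponentIn_subset

lemma comp_eq_pathComponentIn (a : EndPt ε) {E : Set X} (hE : E ∈ ε.sets) {w : X}
    (hw : w ∈ a.comp E) : a.comp E = pathComponentIn E w := by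
  obtain ⟨z, -, hcomp⟩ := a.isComp' E hE
  rw [hcomp] at hw ⊢
  exact (pathComponentIn_congr hw).symm

end EndPt

namespace Flow

variable (φ : Flow ℝ X)

lemma preimage_mem_rExt {E : Set X} (hE : E ∈ (rExt φ).sets) (s : ℝ) :
    φ s ⁻¹' E ∈ (rExt φ).sets := by
  obtain ⟨hEo, hE⟩ := hE
  refine ⟨hEo.preimage (φ.continuous_toFun s), fun x => ?_⟩
  obtain ⟨r, hr⟩ := hE x
  refine ⟨r - s, fun t ht => ?_⟩
  simpa only [mem_preimage, ← φ.map_add] using hr (s + t) (by linarith)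

lemma mapsTo_Elimit_rExt (t : ℝ) : MapsTo (φ t) (Elimit (rExt φ)) (Elimit (rExt φ)) :=
  fun _x hx _E hE => hx _ (φ.preimage_mem_rExt hE t)

def segmentIn (s : ℝ) (E : Set X) : Set X := {y | ∀ u ∈ uIcc 0 s, φ u y ∈ E}

lemma segmentIn_subset {s : ℝ} {E : Set X} : φ.segmentIn s E ⊆ E := fun y hy => by
  simpa only [φ.map_zero_apply] using hy 0 left_mem_uIcc

lemma segmentIn_subset_preimage {s : ℝ} {E : Set X} : φ.segmentIn s E ⊆ φ s ⁻¹' E :=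
  fun _y hy => hy s right_mem_uIcc

lemma isOpen_segmentIn (s : ℝ) {E : Set X} (hE : IsOpen E) : IsOpen (φ.segmentIn s E) := by
  refine isOpen_iff_eventually.2 fun y hy => ?_
  refine isCompact_uIcc.eventually_forall_of_forall_eventually fun u hu => ?_
  have hcont : Continuous fun p : X × ℝ => φ p.2 p.1 := φ.continuous continuous_snd continuous_fst
  exact hcont.continuousAt.preimage_mem_nhds (hE.mem_nhds (hy u hu))

lemma segmentIn_mem_rExt (s : ℝ) {E : Set X} (hE : E ∈ (rExt φ).sets) :
    φ.segmentIn s E ∈ (rExt φ).sets := by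
  obtain ⟨hEo, hE⟩ := hE
  refine ⟨φ.isOpen_segmentIn s hEo, fun y => ?_⟩
  obtain ⟨r, hr⟩ := hE y
  refine ⟨r + |s|, fun t ht u hu => ?_⟩
  have hu' : -|s| ≤ u := by
    rcases le_total 0 s with hs | hs
    · linarith [(uIcc_of_le hs ▸ hu).1, abs_nonneg s]
    · linarith [(uIcc_of_ge hs ▸ hu).1, abs_of_nonpos hs]
  rw [← φ.map_add]
  exact hr _ (by linarith)

lemma joinedIn_of_mem_segmentIn {s : ℝ} {E : Set X} {w : X} (hw : w ∈ φ.segmentIn s E) :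
    JoinedIn E w (φ s w) := by
  have hseg : IsPathConnected ((fun u => φ u w) '' uIcc 0 s) :=
    ((convex_uIcc 0 s).isPathConnected nonempty_uIcc).image
      (φ.continuous continuous_id continuous_const)
  have hjoin := hseg.joinedIn _ ⟨0, left_mem_uIcc, rfl⟩ _ ⟨s, right_mem_uIcc, rfl⟩
  simp only [φ.map_zero_apply] at hjoin
  exact hjoin.mono (image_subset_iff.2 hw)

end Flow

lemma EndPt.map_mem_comp_of_mem_comp_preimage {φ : Flow ℝ X} (a : EndPt (rExt φ)) {E : Set X}
    (hE : E ∈ (rExt φ).sets) {s : ℝ} {x : X} (hx : x ∈ a.comp (φ s ⁻¹' E)) :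
    φ s x ∈ a.comp E := by
  have hF := φ.preimage_mem_rExt hE s
  have hG := φ.segmentIn_mem_rExt s hE
  obtain ⟨w, hw⟩ := a.exists_mem_comp hG
  have hwF : w ∈ a.comp (φ s ⁻¹' E) := a.mono' _ hG _ hF φ.segmentIn_subset_preimage hw
  have hwE : w ∈ a.comp E := a.mono' _ hG _ hE φ.segmentIn_subset hw
  rw [a.comp_eq_pathComponentIn hF hwF] at hx
  rw [a.comp_eq_pathComponentIn hE hwE]
  have hmap : JoinedIn E (φ s w) (φ s x) :=
    (hx.map (φ.continuous_toFun s)).mono (image_preimage_subset _ _)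
  exact (φ.joinedIn_of_mem_segmentIn (a.comp_subset_s16 hG hw)).trans hmap

/-- for a flow `φ` with its `r`-exterior externology, the limit space
`L(X^r)` is invariant, and the induced flow on the end space is trivial (the map induced
by each `φ_s` on compatible families of path-components is the identity). -/
theorem stmt_16 (φ : Flow ℝ X) :
    (∀ x ∈ Elimit (rExt φ), ∀ t : ℝ, φ t x ∈ Elimit (rExt φ)) ∧
      (∀ s : ℝ, ∀ a : EndPt (rExt φ), ∀ E ∈ (rExt φ).sets,
        ∀ x ∈ a.comp ((fun y => φ s y) ⁻¹' E),
          pathComponentIn E (φ s x) = a.comp E) := by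
  refine ⟨fun x hx t => φ.mapsTo_Elimit_rExt t hx, fun s a E hE x hx => ?_⟩
  have hφx := a.map_mem_comp_of_mem_comp_preimage hE hx
  exact (a.comp_eq_pathComponentIn hE hφx).symm
end
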